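/- Under the ellipsoidal-coordinate setup, for every t ∈ I the kinetic energy takes the Stäckel form: (1/2) · Σ_{i=1}^{n+1} (ẋ_i(t))² = −(1/8) · Σ_{k=1}^{n} [ ∏_{j≠k}(λ_k(t) − λ_j(t)) / ∏_{j=1}^{n+1}(λ_k(t) − a_j) ] · λ_k(t) · (λ̇_k(t))², where ẋ_i and λ̇_k denote the derivatives of x_i and λ_k with respect to t. -/

import Mathlib

/-!
Since `ρᵢ` is a product, `ẋᵢ = -(xᵢ/2) Σₖ λ̇ₖ/(aᵢ - λₖ)`, so `Σᵢ ẋᵢ²` is a quadratic form in `λ̇`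
with coefficients `Σᵢ ρᵢ/((aᵢ - λₖ)(aᵢ - λₗ))`. These are Lagrange interpolation sums at the
nodes `aᵢ`. For `k ≠ l` the sum is the `Xⁿ`-coefficient of the interpolant of
`X ∏_{m ≠ k, l} (X - λₘ)`, which has degree `n - 1`, so it vanishes. For `k = l` it is read off
the partial fraction expansion of `X ∏_{m ≠ k} (X - λₘ) / ∏ⱼ (X - aⱼ)` evaluated at `λₖ`.
-/

open Finset

namespace Lagrange

open Polynomial

variable {F ι : Type*} [Field F] {s : Finset ι} {v : ι → F} {P : F[X]}

theorem degree_X_mul_nodal (s : Finset ι) (v : ι → F) :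
    (X * nodal s v).degree = ↑(#s + 1) := by
  rw [degree_mul, degree_X, degree_nodal]
  norm_cast
  omega

variable [DecidableEq ι]

theorem prod_erase_sub_ne_zero (hvs : Set.InjOn v s) {i : ι} (hi : i ∈ s) :
    ∏ j ∈ s.erase i, (v i - v j) ≠ 0 :=
  prod_ne_zero_iff.2 fun _ hj ↦
    sub_ne_zero.2 fun h ↦ (mem_erase.1 hj).1 (hvs (mem_of_mem_erase hj) hi h.symm)

theorem sum_eval_div_prod_sub_eq_zero (hvs : Set.InjOn v s) (hP : P.degree < ↑(#s - 1)) :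
    ∑ i ∈ s, P.eval (v i) / ∏ j ∈ s.erase i, (v i - v j) = 0 := by
  rw [← coeff_eq_sum hvs (hP.trans_le (by exact_mod_cast Nat.sub_le #s 1)),
    coeff_eq_zero_of_degree_lt hP]

theorem eval_div_prod_sub_eq_sum (hvs : Set.InjOn v s) (hP : P.degree < #s) {x : F}
    (hx : ∀ i ∈ s, x ≠ v i) :
    P.eval x / ∏ i ∈ s, (x - v i) =
      ∑ i ∈ s, P.eval (v i) / ((x - v i) * ∏ j ∈ s.erase i, (v i - v j)) := by
  have hnodal : ∏ i ∈ s, (x - v i) ≠ 0 := prod_ne_zero_iff.2 fun i hi ↦ sub_ne_zero.2 (hx i hi)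
  conv_lhs => rw [eq_interpolate hvs hP, eval_interpolate_not_at_node _ hx, eval_nodal,
    mul_div_cancel_left₀ _ hnodal]
  refine sum_congr rfl fun i _ ↦ ?_
  rw [nodalWeight, prod_inv_distrib, div_eq_mul_inv, mul_inv]
  ring

end Lagrange

section EllipsoidalWeight

open Polynomial Lagrange Fintype

variable {F ι κ : Type*} [Field F] [Fintype ι] [DecidableEq ι] [Fintype κ] [DecidableEq κ]

/-- `ρᵢ = xᵢ²` as a function of the ellipsoidal coordinates `μ`. -/
def ellipsoidalWeight (a : ι → F) (μ : κ → F) (i : ι) : F :=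
  a i * (∏ k, (a i - μ k)) / ∏ j ∈ univ.erase i, (a i - a j)

variable {a : ι → F} {μ : κ → F}

theorem sum_ellipsoidalWeight_div_mul_eq_zero (ha : Function.Injective a)
    (hμa : ∀ k i, μ k ≠ a i) (hcard : card κ < card ι) {k l : κ} (hkl : k ≠ l) :
    ∑ i, ellipsoidalWeight a μ i / ((a i - μ k) * (a i - μ l)) = 0 := by
  have hl : l ∈ univ.erase k := mem_erase.2 ⟨hkl.symm, mem_univ l⟩
  have hT : #((univ.erase k).erase l) + 2 = card κ := by
    rw [← card_univ, ← card_erase_add_one (mem_univ k), ← card_erase_add_one hl]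
  have hdeg : (X * nodal ((univ.erase k).erase l) μ).degree < ↑(#(univ : Finset ι) - 1) := by
    rw [degree_X_mul_nodal, card_univ]
    norm_cast
    omega
  rw [← sum_eval_div_prod_sub_eq_zero ha.injOn hdeg]
  refine sum_congr rfl fun i _ ↦ ?_
  have hk : a i - μ k ≠ 0 := sub_ne_zero.2 (hμa k i).symm
  have hl' : a i - μ l ≠ 0 := sub_ne_zero.2 (hμa l i).symm
  have hD := prod_erase_sub_ne_zero ha.injOn (mem_univ i)
  rw [ellipsoidalWeight, eval_mul, eval_X, eval_nodal, ← mul_prod_erase _ _ (mem_univ k),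
    ← mul_prod_erase _ _ hl]
  field_simp

theorem sum_ellipsoidalWeight_div_sq (ha : Function.Injective a)
    (hμa : ∀ k i, μ k ≠ a i) (hcard : card κ < card ι) (k : κ) :
    ∑ i, ellipsoidalWeight a μ i / (a i - μ k) ^ 2 =
      -(μ k * (∏ m ∈ univ.erase k, (μ k - μ m)) / ∏ j, (μ k - a j)) := by
  have hdeg : (X * nodal (univ.erase k) μ).degree < ↑(#(univ : Finset ι)) := by
    rw [degree_X_mul_nodal, card_erase_of_mem (mem_univ k), card_univ, card_univ]
    norm_cast
    have := card_pos_iff.2 ⟨k⟩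
    omega
  have key := eval_div_prod_sub_eq_sum ha.injOn hdeg (x := μ k) fun i _ ↦ hμa k i
  rw [eval_mul, eval_X, eval_nodal] at key
  rw [key, ← sum_neg_distrib]
  refine sum_congr rfl fun i _ ↦ ?_
  have hk : a i - μ k ≠ 0 := sub_ne_zero.2 (hμa k i).symm
  have hk' : μ k - a i ≠ 0 := sub_ne_zero.2 (hμa k i)
  have hD := prod_erase_sub_ne_zero ha.injOn (mem_univ i)
  rw [ellipsoidalWeight, eval_mul, eval_X, eval_nodal, ← mul_prod_erase _ _ (mem_univ k)]
  field_simp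
  ring

theorem sum_ellipsoidalWeight_mul_sq_sum_div (ha : Function.Injective a)
    (hμa : ∀ k i, μ k ≠ a i) (hcard : card κ < card ι) (c : κ → F) :
    ∑ i, ellipsoidalWeight a μ i * (∑ k, c k / (a i - μ k)) ^ 2 =
      -∑ k, (∏ m ∈ univ.erase k, (μ k - μ m)) / (∏ j, (μ k - a j)) * μ k * c k ^ 2 := by
  calc ∑ i, ellipsoidalWeight a μ i * (∑ k, c k / (a i - μ k)) ^ 2
      = ∑ k, ∑ l, c k * c l * ∑ i, ellipsoidalWeight a μ i / ((a i - μ k) * (a i - μ l)) := by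
        simp_rw [sq, Finset.sum_mul_sum, mul_sum]
        rw [sum_comm]
        refine sum_congr rfl fun k _ ↦ ?_
        rw [sum_comm]
        refine sum_congr rfl fun l _ ↦ sum_congr rfl fun i _ ↦ ?_
        rw [div_mul_div_comm]
        ring
    _ = ∑ k, c k * c k * ∑ i, ellipsoidalWeight a μ i / ((a i - μ k) * (a i - μ k)) :=
        sum_congr rfl fun k _ ↦ sum_eq_single k
          (fun l _ hlk ↦ by rw [sum_ellipsoidalWeight_div_mul_eq_zero ha hμa hcard hlk.symm,
            mul_zero])
          (fun hk ↦ absurd (mem_univ k) hk)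
    _ = _ := by
        simp_rw [← sq, sum_ellipsoidalWeight_div_sq ha hμa hcard, ← sum_neg_distrib]
        refine sum_congr rfl fun k _ ↦ ?_
        ring

end EllipsoidalWeight

section Derivatives

variable {𝕜 ι κ : Type*} [NontriviallyNormedField 𝕜]

theorem HasDerivAt.fun_finsetProd_of_ne_zero {s : Finset ι} {f : ι → 𝕜 → 𝕜} {f' : ι → 𝕜} {t : 𝕜}
    (hf : ∀ i ∈ s, HasDerivAt (f i) (f' i) t) (hne : ∀ i ∈ s, f i t ≠ 0) :
    HasDerivAt (∏ i ∈ s, f i ·) ((∏ i ∈ s, f i t) * ∑ i ∈ s, f' i / f i t) t := by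
  classical
  refine (HasDerivAt.fun_finsetProd hf).congr_deriv ?_
  rw [mul_sum]
  refine sum_congr rfl fun i hi ↦ ?_
  rw [smul_eq_mul, ← mul_prod_erase s _ hi]
  field_simp [hne i hi]

variable [Fintype ι] [DecidableEq ι] [Fintype κ]

theorem hasDerivAt_ellipsoidalWeight {a : ι → 𝕜} {μ : κ → 𝕜 → 𝕜} {μ' : κ → 𝕜} {t : 𝕜} {i : ι}
    (hμ : ∀ k, HasDerivAt (μ k) (μ' k) t) (hμa : ∀ k, μ k t ≠ a i) :
    HasDerivAt (fun s ↦ ellipsoidalWeight a (μ · s) i)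
      (-(ellipsoidalWeight a (μ · t) i * ∑ k, μ' k / (a i - μ k t))) t := by
  have hprod := HasDerivAt.fun_finsetProd_of_ne_zero (s := univ)
    (fun k _ ↦ (hμ k).const_sub (a i)) (fun k _ ↦ sub_ne_zero.2 (hμa k).symm)
  refine ((hprod.const_mul (a i)).div_const _).congr_deriv ?_
  simp only [ellipsoidalWeight, neg_div, sum_neg_distrib]
  ring

end Derivatives

theorem sq_of_hasDerivAt_sqrt {f : ℝ → ℝ} {f' d t : ℝ} (hf : HasDerivAt f f' t) (hpos : 0 < f t)
    (hd : HasDerivAt (fun s ↦ √(f s)) d t) : d ^ 2 = f' ^ 2 / (4 * f t) := by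
  rw [hd.unique (hf.sqrt hpos.ne'), div_pow, mul_pow, Real.sq_sqrt hpos.le]
  norm_num

theorem staeckel_energy_form (n : ℕ)
    (a : Fin (n + 1) → ℝ) (ha_inj : Function.Injective a)
    (p q : ℝ) (lam lamdot : Fin n → ℝ → ℝ) (x xdot : Fin (n + 1) → ℝ → ℝ)
    (hlam_ne_a : ∀ t ∈ Set.Ioo p q, ∀ k : Fin n, ∀ j : Fin (n + 1), lam k t ≠ a j)
    (hrho_pos : ∀ t ∈ Set.Ioo p q, ∀ i : Fin (n + 1),
      0 < a i * (∏ k, (a i - lam k t)) / (∏ j ∈ univ.erase i, (a i - a j)))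
    (hx : ∀ t : ℝ, ∀ i : Fin (n + 1), x i t =
      Real.sqrt (a i * (∏ k, (a i - lam k t)) / (∏ j ∈ univ.erase i, (a i - a j))))
    (hlam_deriv : ∀ t ∈ Set.Ioo p q, ∀ k : Fin n, HasDerivAt (lam k) (lamdot k t) t)
    (hx_deriv : ∀ t ∈ Set.Ioo p q, ∀ i : Fin (n + 1), HasDerivAt (x i) (xdot i t) t) :
    ∀ t ∈ Set.Ioo p q,
      (1 / 2) * ∑ i, (xdot i t) ^ 2 =
        -(1 / 8) * ∑ k, ((∏ j ∈ univ.erase k, (lam k t - lam j t)) /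
          (∏ j, (lam k t - a j))) * lam k t * (lamdot k t) ^ 2 := by
  intro t ht
  have hxdot_sq : ∀ i, xdot i t ^ 2 =
      ellipsoidalWeight a (lam · t) i / 4 * (∑ k, lamdot k t / (a i - lam k t)) ^ 2 := by
    intro i
    have hρ := hasDerivAt_ellipsoidalWeight (hlam_deriv t ht) (fun k ↦ hlam_ne_a t ht k i)
    have hxi : x i = fun s ↦ √(ellipsoidalWeight a (lam · s) i) := funext fun s ↦ hx s i
    have hpos : 0 < ellipsoidalWeight a (lam · t) i := hrho_pos t ht i
    rw [sq_of_hasDerivAt_sqrt hρ hpos (hxi ▸ hx_deriv t ht i)]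
    field_simp
  calc (1 / 2) * ∑ i, xdot i t ^ 2
      = 1 / 8 * ∑ i, ellipsoidalWeight a (lam · t) i *
          (∑ k, lamdot k t / (a i - lam k t)) ^ 2 := by
        simp_rw [hxdot_sq, mul_sum]
        refine sum_congr rfl fun i _ ↦ ?_
        ring
    _ = _ := by
        rw [sum_ellipsoidalWeight_mul_sq_sum_div ha_inj (fun k i ↦ hlam_ne_a t ht k i)
          (by simp) (lamdot · t)]
        ring
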